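/- arXiv:2303.05898 — 2 statements merged into one kernel-verified Lean document; each statement's English description precedes it below -/
import Mathlib

section
/- For every m ∈ ℝ, s > 0 and x ∈ ℝ, ∫₀^∞ (2π s² φ)^{−1/2} e^{−(x−m)²/(2 s² φ)} · ((1/2)^{1/2}/Γ(1/2)) · φ^{−3/2} e^{−1/(2φ)} dφ = 1/(π s (1 + ((x−m)/s)²)); i.e., a normal density with mean m and variance s²φ mixed over φ with an inverse-Gamma(1/2, 1/2) density equals the Cauchy density with location m and scale s. -/
open Real MeasureTheory Set

/-!
For fixed `φ > 0` the product of the two densities is `(2πs)⁻¹ φ⁻² e^{-r/φ}` with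
`r = (1 + ((x - m)/s)²)/2`. The substitution `ψ = 1/φ` turns `∫ φ^{-a-1} e^{-b/φ} dφ` into the
Gamma integral `∫ ψ^{a-1} e^{-bψ} dψ = Γ(a)/b^a`; with `a = 1` the mixture is `(2πs)⁻¹ · r⁻¹`.
-/

lemma integral_rpow_neg_sub_one_mul_exp_neg_div_Ioi {a b : ℝ} (ha : 0 < a) (hb : 0 < b) :
    ∫ φ in Ioi 0, φ ^ (-a - 1) * exp (-b / φ) = (1 / b) ^ a * Gamma a := by
  rw [← integral_rpow_mul_exp_neg_mul_Ioi ha hb,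
    ← integral_comp_rpow_Ioi (fun t ↦ t ^ (a - 1) * exp (-(b * t))) (neg_ne_zero.2 one_ne_zero)]
  refine setIntegral_congr_fun measurableSet_Ioi fun φ (hφ : 0 < φ) ↦ ?_
  have hpow : φ ^ (-a - 1) = φ ^ ((-1 : ℝ) - 1) * (φ ^ (-1 : ℝ)) ^ (a - 1) := by
    rw [← rpow_mul hφ.le, ← rpow_add hφ]; ring_nf
  rw [hpow, smul_eq_mul, abs_neg, abs_one, one_mul, rpow_neg_one, div_eq_mul_inv,
    neg_mul, mul_assoc]

lemma two_pi_sq_rpow_neg_half_mul_invGamma_half_const {s : ℝ} (hs : 0 < s) :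
    (2 * π * s ^ 2) ^ (-(1 / 2) : ℝ) * ((1 / 2 : ℝ) ^ (1 / 2 : ℝ) / Gamma (1 / 2)) =
      1 / (2 * π * s) := by
  rw [Gamma_one_half_eq, rpow_neg (by positivity), ← sqrt_eq_rpow, ← sqrt_eq_rpow,
    sqrt_mul' _ (sq_nonneg s), sqrt_sq hs.le, sqrt_mul zero_le_two, one_div, sqrt_inv]
  have h2 : √2 ^ 2 = 2 := sq_sqrt zero_le_two
  have hπ : √π ^ 2 = π := sq_sqrt pi_pos.le
  have : 0 < √π := sqrt_pos.2 pi_pos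
  field_simp
  rw [h2, hπ]

lemma normal_mul_invGamma_half_eq {m s x φ : ℝ} (hs : 0 < s) (hφ : 0 < φ) :
    (2 * π * s ^ 2 * φ) ^ (-(1 / 2) : ℝ) * exp (-(x - m) ^ 2 / (2 * s ^ 2 * φ)) *
        ((1 / 2 : ℝ) ^ (1 / 2 : ℝ) / Gamma (1 / 2)) * φ ^ (-(3 / 2) : ℝ) * exp (-1 / (2 * φ)) =
      1 / (2 * π * s) * (φ ^ (-1 - 1 : ℝ) * exp (-((1 + ((x - m) / s) ^ 2) / 2) / φ)) := by
  have hpow : φ ^ (-(1 / 2) : ℝ) * φ ^ (-(3 / 2) : ℝ) = φ ^ (-1 - 1 : ℝ) := by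
    rw [← rpow_add hφ]; norm_num
  have hexp : exp (-(x - m) ^ 2 / (2 * s ^ 2 * φ)) * exp (-1 / (2 * φ)) =
      exp (-((1 + ((x - m) / s) ^ 2) / 2) / φ) := by
    rw [← exp_add]
    congr 1
    field_simp
    ring
  rw [mul_rpow (by positivity) hφ.le, ← two_pi_sq_rpow_neg_half_mul_invGamma_half_const hs,
    ← hpow, ← hexp]
  ring

/-- A normal density with mean `m` and variance `s²φ`, mixed over `φ` with an
inverse-Gamma(1/2, 1/2) density, equals the Cauchy density with location `m`
and scale `s`. -/
theorem normal_invGamma_half_mixture_eq_cauchy (m s x : ℝ) (hs : 0 < s) :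
    ∫ φ in Set.Ioi (0 : ℝ),
        (2 * Real.pi * s ^ 2 * φ) ^ (-(1 / 2) : ℝ) *
          Real.exp (-(x - m) ^ 2 / (2 * s ^ 2 * φ)) *
          (((1 : ℝ) / 2) ^ ((1 : ℝ) / 2) / Real.Gamma (1 / 2)) * φ ^ (-(3 / 2) : ℝ) *
          Real.exp (-1 / (2 * φ)) =
      1 / (Real.pi * s * (1 + ((x - m) / s) ^ 2)) := by
  have hr : 0 < (1 + ((x - m) / s) ^ 2) / 2 := by positivity
  rw [setIntegral_congr_fun measurableSet_Ioi fun φ hφ ↦ normal_mul_invGamma_half_eq hs hφ,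
    integral_const_mul, integral_rpow_neg_sub_one_mul_exp_neg_div_Ioi one_pos hr,
    rpow_one, Gamma_one]
  field_simp
end

section
/- For every t > 0, ∫₀^∞ ((1/z)^{1/2}/Γ(1/2)) · t^{−3/2} e^{−1/(z t)} · (1/Γ(1/2)) · z^{−3/2} e^{−1/z} dz = 1/(π √t (1 + t)); i.e., mixing an inverse-Gamma density in t with shape 1/2 and rate 1/z over z distributed as inverse-Gamma with shape 1/2 and rate 1 yields the density of the square of a standard half-Cauchy random variable. -/
/-!
Since `Γ(1/2)² = π` and `z^{-1/2} z^{-3/2} = z^{-2}`, the integrand is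
`t^{-3/2}/π · z^{-2} e^{-c/z}` with `c = (1 + t)/t`. The substitution `u = 1/z` turns
`∫₀^∞ z^{-(s+1)} e^{-c/z} dz` into the Gamma integral `∫₀^∞ u^{s-1} e^{-cu} du = Γ(s)/c^s`;
for `s = 1` this is `t/(1 + t)`, and `t^{-3/2} · t = 1/√t`.
-/

open Real MeasureTheory Set

theorem integral_rpow_neg_mul_exp_neg_div_Ioi {s c : ℝ} (hs : 0 < s) (hc : 0 < c) :
    ∫ z in Ioi 0, z ^ (-(s + 1)) * exp (-c / z) = (1 / c) ^ s * Gamma s := by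
  rw [← integral_rpow_mul_exp_neg_mul_Ioi hs hc,
    ← integral_comp_rpow_Ioi (fun y ↦ y ^ (s - 1) * exp (-(c * y))) (p := -1) (by norm_num)]
  refine setIntegral_congr_fun measurableSet_Ioi fun z (hz : 0 < z) => ?_
  have hpow : z ^ (-1 - 1 : ℝ) * (z ^ (-1 : ℝ)) ^ (s - 1) = z ^ (-(s + 1)) := by
    rw [← rpow_mul hz.le, ← rpow_add hz]
    ring_nf
  rw [smul_eq_mul, abs_neg, abs_one, one_mul, ← mul_assoc, hpow, rpow_neg_one, ← div_eq_mul_inv,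
    neg_div]

/-- Mixing an inverse-Gamma density in `t` with shape 1/2 and rate `1/z` over `z`
distributed as inverse-Gamma with shape 1/2 and rate 1 yields the density of the
square of a standard half-Cauchy random variable. -/
theorem invGamma_mixture_eq_sq_halfCauchy_density (t : ℝ) (ht : 0 < t) :
    ∫ z in Set.Ioi (0 : ℝ),
        ((1 / z) ^ ((1 : ℝ) / 2) / Real.Gamma (1 / 2)) * t ^ (-(3 / 2) : ℝ) *
          Real.exp (-1 / (z * t)) * (1 / Real.Gamma (1 / 2)) * z ^ (-(3 / 2) : ℝ) *
          Real.exp (-1 / z) =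
      1 / (Real.pi * Real.sqrt t * (1 + t)) := by
  have hGamma_sq : Gamma (1 / 2) * Gamma (1 / 2) = π := by
    rw [Gamma_one_half_eq, mul_self_sqrt pi_pos.le]
  have h_integrand : ∀ z ∈ Ioi (0 : ℝ),
      ((1 / z) ^ ((1 : ℝ) / 2) / Gamma (1 / 2)) * t ^ (-(3 / 2) : ℝ) * exp (-1 / (z * t)) *
          (1 / Gamma (1 / 2)) * z ^ (-(3 / 2) : ℝ) * exp (-1 / z) =
        t ^ (-(3 / 2) : ℝ) / π * (z ^ (-(1 + 1) : ℝ) * exp (-((1 + t) / t) / z)) := by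
    intro z (hz : 0 < z)
    have hpow : (1 / z) ^ ((1 : ℝ) / 2) * z ^ (-(3 / 2) : ℝ) = z ^ (-(1 + 1) : ℝ) := by
      rw [one_div, inv_rpow hz.le, ← rpow_neg hz.le, ← rpow_add hz]
      norm_num
    have hexp : exp (-1 / (z * t)) * exp (-1 / z) = exp (-((1 + t) / t) / z) := by
      rw [← exp_add]
      congr 1
      field_simp
      ring
    rw [← hGamma_sq, ← hpow, ← hexp]
    field_simp
  have ht_pow : t ^ (-(3 / 2) : ℝ) * t = (sqrt t)⁻¹ := by
    rw [sqrt_eq_rpow, ← rpow_neg ht.le, ← rpow_add_one ht.ne']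
    norm_num
  rw [setIntegral_congr_fun measurableSet_Ioi h_integrand, integral_const_mul,
    integral_rpow_neg_mul_exp_neg_div_Ioi one_pos (by positivity), rpow_one, Gamma_one,
    mul_one, one_div_div, div_mul_div_comm, ht_pow]
  field_simp
end
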